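/- For every squarefree positive integer m with gcd(m, 6) = 1, the number 36m is e-unitary perfect, i.e., σ^{(e)*}(36m) = 72m. Consequently, there are infinitely many e-unitary perfect numbers. -/

import Mathlib

open scoped Classical BigOperators

/-- `d` is a unitary divisor of `m`: `d ∣ m` and `gcd (d, m/d) = 1`. -/
def IsUnitaryDivisor (d m : ℕ) : Prop := d ∣ m ∧ Nat.gcd d (m / d) = 1

/-- `ω m` is the number of distinct prime divisors of `m`. -/
def omega (m : ℕ) : ℕ := m.primeFactors.card

/-- `d` is an exponential unitary divisor of `n`: `d` has the same prime factors as `n`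
and, at each such prime, the exponent of `d` is a unitary divisor of the exponent of `n`.
By convention `1` is the only e-unitary divisor of `1`. -/
def IsExpUnitaryDivisor (d n : ℕ) : Prop :=
  0 < d ∧ 0 < n ∧ d.primeFactors = n.primeFactors ∧
    ∀ p ∈ n.primeFactors, IsUnitaryDivisor (d.factorization p) (n.factorization p)

/-- `d` is an exponential divisor of `n`. -/
def IsExpDivisor (d n : ℕ) : Prop :=
  0 < d ∧ 0 < n ∧ d.primeFactors = n.primeFactors ∧
    ∀ p ∈ n.primeFactors, d.factorization p ∣ n.factorization p

/-- the sum of the e-unitary divisors of `n` -/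
noncomputable def sigmaEStar (n : ℕ) : ℕ :=
  ∑ d ∈ n.divisors.filter (fun d => IsExpUnitaryDivisor d n), d

/-- the number of the e-unitary divisors of `n` -/
noncomputable def tauEStar (n : ℕ) : ℕ :=
  (n.divisors.filter (fun d => IsExpUnitaryDivisor d n)).card

/-- the sum of the e-divisors of `n` -/
noncomputable def sigmaE (n : ℕ) : ℕ :=
  ∑ d ∈ n.divisors.filter (fun d => IsExpDivisor d n), d

/-- the number of the e-divisors of `n` -/
noncomputable def tauE (n : ℕ) : ℕ :=
  (n.divisors.filter (fun d => IsExpDivisor d n)).card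

/-- the number of unitary divisors of `m` -/
noncomputable def tauStar (m : ℕ) : ℕ :=
  (m.divisors.filter (fun d => IsUnitaryDivisor d m)).card

/-- the unitary analogue `φ*` of Euler's function: multiplicative with `φ*(p^a) = p^a - 1` -/
def phiStar (m : ℕ) : ℕ := ∏ p ∈ m.primeFactors, (p ^ m.factorization p - 1)

/-- the e-unitary Euler function `φ^{(e)*}` -/
def phiEStar (n : ℕ) : ℕ := ∏ p ∈ n.primeFactors, phiStar (n.factorization p)

/-- the exponential Euler function `φ^{(e)}` -/
def phiE (n : ℕ) : ℕ := ∏ p ∈ n.primeFactors, Nat.totient (n.factorization p)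

/-- the exponential unitary analogue of the Möbius function -/
def muEStar (n : ℕ) : ℤ := (-1) ^ (∑ p ∈ n.primeFactors, omega (n.factorization p))

/-!
An e-unitary divisor of `n` is determined by its exponents, which are chosen independently at
each prime `p ∣ n` among the unitary divisors of the exponent of `p` in `n`. Hence
`σ^{(e)*}` is multiplicative, with `σ^{(e)*}(p^a) = ∑_{b ‖ a} p^b`. The only unitary divisor
of `1` is `1`, and those of `2` are `1` and `2`, so `σ^{(e)*}(m) = m` for squarefree `m` and
`σ^{(e)*}(2^2 · 3^2) = 6 · 12 = 2 · 36`. The primes `p > 3` then give infinitely many e-unitary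
perfect numbers `36p`.
-/

noncomputable def unitaryDivisors (a : ℕ) : Finset ℕ := {b ∈ a.divisors | IsUnitaryDivisor b a}

theorem mem_unitaryDivisors {a b : ℕ} :
    b ∈ unitaryDivisors a ↔ a ≠ 0 ∧ IsUnitaryDivisor b a := by
  rw [unitaryDivisors, Finset.mem_filter, Nat.mem_divisors]
  exact ⟨fun h => ⟨h.1.2, h.2⟩, fun h => ⟨⟨h.2.1, h.1⟩, h.2⟩⟩

theorem unitaryDivisors_prime {q : ℕ} (hq : q.Prime) : unitaryDivisors q = {1, q} := by
  ext b
  simp only [unitaryDivisors, Finset.mem_filter, hq.divisors, Finset.mem_insert,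
    Finset.mem_singleton, IsUnitaryDivisor, and_iff_left_iff_imp]
  rintro (rfl | rfl) <;> simp [Nat.div_self hq.pos]

theorem unitaryDivisors_one : unitaryDivisors 1 = {1} := by
  rw [unitaryDivisors, Nat.divisors_one, Finset.filter_singleton,
    if_pos ⟨one_dvd 1, Nat.gcd_one_left _⟩]

theorem IsUnitaryDivisor.ne_zero {a b : ℕ} (h : IsUnitaryDivisor b a) (ha : a ≠ 0) : b ≠ 0 := by
  rintro rfl
  exact ha (Nat.eq_zero_of_zero_dvd h.1)

theorem Nat.factorization_ne_zero_of_mem_primeFactors {n p : ℕ} (hp : p ∈ n.primeFactors) :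
    n.factorization p ≠ 0 :=
  Finsupp.mem_support_iff.1 (n.support_factorization ▸ hp)

theorem IsExpUnitaryDivisor.dvd {d n : ℕ} (h : IsExpUnitaryDivisor d n) : d ∣ n := by
  obtain ⟨hd, hn, hpf, hexp⟩ := h
  refine (Nat.factorization_le_iff_dvd hd.ne' hn.ne').1 fun p => ?_
  by_cases hp : p ∈ n.primeFactors
  · exact Nat.le_of_dvd (Nat.pos_of_ne_zero (Nat.factorization_ne_zero_of_mem_primeFactors hp))
      (hexp p hp).1
  · rw [Finsupp.notMem_support_iff.1 (by rwa [Nat.support_factorization, hpf])]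
    exact Nat.zero_le _

theorem Nat.factorization_prod_pow_apply {s : Finset ℕ} (hs : ∀ p ∈ s, p.Prime) (e : ℕ → ℕ)
    (q : ℕ) : (∏ p ∈ s, p ^ e p).factorization q = if q ∈ s then e q else 0 := by
  rw [Nat.factorization_prod fun p hp => pow_ne_zero _ (hs p hp).ne_zero, Finset.sum_apply',
    Finset.sum_congr rfl fun p hp => congrArg (· q) ((hs p hp).factorization_pow)]
  simp [Finsupp.single_apply]

theorem isExpUnitaryDivisor_prod_pow {n : ℕ} (hn : n ≠ 0) {e : ℕ → ℕ}
    (he : ∀ p ∈ n.primeFactors, IsUnitaryDivisor (e p) (n.factorization p)) :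
    IsExpUnitaryDivisor (∏ p ∈ n.primeFactors, p ^ e p) n := by
  have hprime : ∀ p ∈ n.primeFactors, p.Prime := fun p hp => Nat.prime_of_mem_primeFactors hp
  have hfact := Nat.factorization_prod_pow_apply hprime e
  refine ⟨Finset.prod_pos fun p hp => pow_pos (hprime p hp).pos _, Nat.pos_of_ne_zero hn, ?_,
    fun q hq => by simpa only [hfact, if_pos hq] using he q hq⟩
  ext q
  rw [← Nat.support_factorization, Finsupp.mem_support_iff, hfact]
  split_ifs with hq
  · simpa only [hq, iff_true] using
      (he q hq).ne_zero (Nat.factorization_ne_zero_of_mem_primeFactors hq)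
  · simp only [hq, ne_eq, not_true_eq_false]

theorem sigmaEStar_eq_prod_factorization {n : ℕ} (hn : n ≠ 0) :
    sigmaEStar n = n.factorization.prod fun p a => ∑ b ∈ unitaryDivisors a, p ^ b := by
  -- Expanding the product gives a sum over exponent choices `x`; they correspond to the
  -- e-unitary divisors via `x ↦ ∏ p ^ x p` and `d ↦ d.factorization`.
  set E : (∀ p ∈ n.primeFactors, ℕ) → ℕ → ℕ :=
    fun x p => if h : p ∈ n.primeFactors then x p h else 0
  have hfact : ∀ x q, (∏ p ∈ n.primeFactors, p ^ E x p).factorization q =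
      if q ∈ n.primeFactors then E x q else 0 :=
    fun x => Nat.factorization_prod_pow_apply (fun _ => Nat.prime_of_mem_primeFactors) _
  rw [Nat.prod_factorization_eq_prod_primeFactors, Finset.prod_sum, sigmaEStar]
  symm
  refine Finset.sum_nbij' (fun x => ∏ p ∈ n.primeFactors, p ^ E x p)
    (fun d p _ => d.factorization p) ?_ ?_ ?_ ?_ ?_
  · intro x hx
    have hd := isExpUnitaryDivisor_prod_pow hn (e := E x) fun p hp => by
      simpa only [E, dif_pos hp] using (mem_unitaryDivisors.1 (Finset.mem_pi.1 hx p hp)).2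
    exact Finset.mem_filter.2 ⟨Nat.mem_divisors.2 ⟨hd.dvd, hn⟩, hd⟩
  · intro d hd
    exact Finset.mem_pi.2 fun p hp => mem_unitaryDivisors.2
      ⟨Nat.factorization_ne_zero_of_mem_primeFactors hp, (Finset.mem_filter.1 hd).2.2.2.2 p hp⟩
  · intro x _
    funext p hp
    simp only [hfact, E, hp, if_true, dif_pos]
  · intro d hd
    obtain ⟨hd0, -, hpf, -⟩ := (Finset.mem_filter.1 hd).2
    calc ∏ p ∈ n.primeFactors, p ^ E (fun p _ => d.factorization p) p
        = ∏ p ∈ d.primeFactors, p ^ d.factorization p := by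
          rw [hpf]
          exact Finset.prod_congr rfl fun p hp => by simp only [E, dif_pos hp]
      _ = d := Nat.prod_factorization_pow_eq_self hd0.ne'
  · intro x _
    rw [← Finset.prod_attach n.primeFactors]
    exact Finset.prod_congr rfl fun p _ => by simp only [E, dif_pos p.2]

theorem sigmaEStar_mul {a b : ℕ} (ha : a ≠ 0) (hb : b ≠ 0) (hab : a.Coprime b) :
    sigmaEStar (a * b) = sigmaEStar a * sigmaEStar b := by
  rw [sigmaEStar_eq_prod_factorization (mul_ne_zero ha hb), sigmaEStar_eq_prod_factorization ha,
    sigmaEStar_eq_prod_factorization hb, Nat.factorization_mul_of_coprime hab,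
    Finsupp.prod_add_index_of_disjoint]
  simpa only [Nat.support_factorization] using hab.disjoint_primeFactors

theorem sigmaEStar_prime_sq {p : ℕ} (hp : p.Prime) : sigmaEStar (p ^ 2) = p + p ^ 2 := by
  rw [sigmaEStar_eq_prod_factorization (pow_ne_zero 2 hp.ne_zero), hp.factorization_pow,
    Finsupp.prod, Finsupp.support_single _ two_ne_zero, Finset.prod_singleton,
    Finsupp.single_eq_same, unitaryDivisors_prime Nat.prime_two,
    Finset.sum_pair (by norm_num : 1 ≠ 2), pow_one]

theorem sigmaEStar_of_squarefree {m : ℕ} (hm : Squarefree m) : sigmaEStar m = m := by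
  rw [sigmaEStar_eq_prod_factorization hm.ne_zero, Nat.prod_factorization_eq_prod_primeFactors]
  conv_rhs => rw [← Nat.prod_primeFactors_of_squarefree hm]
  refine Finset.prod_congr rfl fun p hp => ?_
  rw [Nat.factorization_eq_one_of_squarefree hm (Nat.prime_of_mem_primeFactors hp)
    (Nat.dvd_of_mem_primeFactors hp), unitaryDivisors_one, Finset.sum_singleton, pow_one]

theorem sigmaEStar_36_mul {m : ℕ} (hm : Squarefree m) (hm6 : m.Coprime 6) :
    sigmaEStar (36 * m) = 2 * (36 * m) := by
  have h36 : Nat.Coprime 36 m := (Nat.Coprime.pow_left 2 hm6.symm : Nat.Coprime (6 ^ 2) m)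
  rw [sigmaEStar_mul (by norm_num) hm.ne_zero h36, show 36 = 2 ^ 2 * 3 ^ 2 by norm_num,
    sigmaEStar_mul (by norm_num) (by norm_num) (by norm_num), sigmaEStar_prime_sq Nat.prime_two,
    sigmaEStar_prime_sq Nat.prime_three, sigmaEStar_of_squarefree hm]
  ring

/-- For every squarefree `m` coprime to `6`, the number `36m` is e-unitary perfect;
consequently there are infinitely many e-unitary perfect numbers. -/
theorem e_unitary_perfect_36m_and_infinite :
    (∀ m : ℕ, 0 < m → Squarefree m → Nat.gcd m 6 = 1 →
      sigmaEStar (36 * m) = 2 * (36 * m)) ∧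
    {n : ℕ | sigmaEStar n = 2 * n}.Infinite := by
  refine ⟨fun m _ hm hm6 => sigmaEStar_36_mul hm hm6, ?_⟩
  refine Set.infinite_of_not_bddAbove fun ⟨N, hN⟩ => ?_
  obtain ⟨p, hNp, hp⟩ := Nat.exists_infinite_primes (N + 4)
  have hp6 : p.Coprime (2 * 3) := Nat.Coprime.mul_right
    ((Nat.coprime_primes hp Nat.prime_two).2 (by omega))
    ((Nat.coprime_primes hp Nat.prime_three).2 (by omega))
  have h36p := hN (sigmaEStar_36_mul hp.squarefree hp6)
  omega
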